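/- arXiv:1606.08418 — 2 statements merged into one kernel-verified Lean document; each statement's English description precedes it below -/
import Mathlib

section
/- Let n ≥ 3 and let S ⊂ ℝⁿ be a compact embedded smooth submanifold of dimension m with n − m ≥ 3, and fix x_∞ ∈ S and β₁, β₂ > 0. Let x_k ∈ S with x_k → x_∞, let a_k > 0 with a_k → 0, and let ε_k > 0 with ε_k/a_k → 0. Then sup { ε_k^{n−m−2} ∫_S ‖x_k + a_k ζ − y‖^{−(n−2)} dH^m(y) : ζ ∈ ℝⁿ, ‖ζ‖ ≤ β₁, dist(ζ, T_{x_∞}S) ≥ β₂ } → 0 as k → ∞. In other words, after rescaling around x_k at scale a_k much larger than ε_k, the conformal factors u_{ε_k} converge uniformly to 1 on compact sets avoiding the tangent plane T_{x_∞}S. -/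
/-!
Near `x_∞`, in a chart, `S` is the image of a map that approximates its derivative, an injective
linear map onto `T_{x_∞}S`, up to an arbitrarily small error. Such a map is bi-Lipschitz, so `S`
has `m`-dimensional growth `H^m(S ∩ B(q, r)) ≤ C r^m` there, and every chord of `S` near `x_∞` is
almost parallel to `T_{x_∞}S`. Since `ζ` stays at distance `β₂` from that plane, the point
`x_k + a_k ζ` is at distance `≳ a_k` from `S` near `x_∞` and at distance `≳ 1` from the rest of
`S`. Summing the potential over dyadic shells then gives
`∫_S ‖x_k + a_k ζ - y‖^{-(n-2)} ≲ 1 + a_k^{-(n-m-2)}`, so the rescaled factor is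
`≲ ε_k^{n-m-2} + (ε_k / a_k)^{n-m-2} → 0`.
-/

open MeasureTheory Metric Filter Topology Manifold Set
open scoped ENNReal NNReal

def UpperAhlforsRegular {X : Type*} [PseudoMetricSpace X] [MeasurableSpace X] (μ : Measure X)
    (A : Set X) (d : ℕ) (C : ℝ≥0) : Prop :=
  ∀ q r, 0 < r → μ (A ∩ closedBall q r) ≤ ENNReal.ofReal (C * r ^ d)

theorem Topology.IsInducing.exists_range_inter_closedBall_subset_image {X Y : Type*}
    [TopologicalSpace X] [PseudoMetricSpace Y] {f : X → Y} (hf : IsInducing f) {U : Set X}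
    (hU : IsOpen U) {p : X} (hp : p ∈ U) : ∃ ρ > 0, range f ∩ closedBall (f p) ρ ⊆ f '' U := by
  obtain ⟨t, ht, rfl⟩ := hf.isOpen_iff.mp hU
  obtain ⟨ρ, hρ, hρt⟩ := nhds_basis_closedBall.mem_iff.mp (ht.mem_nhds hp)
  exact ⟨ρ, hρ, fun _ ⟨⟨q, hq⟩, hqρ⟩ => ⟨q, by subst hq; exact hρt hqρ, hq⟩⟩

theorem measure_range_lt_top_of_upperAhlforsRegular {X Y : Type*} [TopologicalSpace X]
    [CompactSpace X] [PseudoMetricSpace Y] [MeasurableSpace Y] {μ : Measure Y} {f : X → Y} {d : ℕ}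
    (hf : IsInducing f)
    (hloc : ∀ p, ∃ U, IsOpen U ∧ p ∈ U ∧ ∃ C, UpperAhlforsRegular μ (f '' U) d C) :
    μ (range f) < ∞ := by
  refine (isCompact_range hf.continuous).measure_lt_top_of_nhdsWithin ?_
  rintro - ⟨p, rfl⟩
  obtain ⟨U, hU, hpU, C, hC⟩ := hloc p
  obtain ⟨ρ, hρ, hρU⟩ := hf.exists_range_inter_closedBall_subset_image hU hpU
  refine ⟨range f ∩ closedBall (f p) ρ, inter_mem_nhdsWithin _ (closedBall_mem_nhds _ hρ), ?_⟩
  calc μ (range f ∩ closedBall (f p) ρ) ≤ μ (f '' U ∩ closedBall (f p) ρ) :=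
        measure_mono (subset_inter hρU inter_subset_right)
    _ ≤ ENNReal.ofReal (C * ρ ^ d) := hC _ _ hρ
    _ < ∞ := ENNReal.ofReal_lt_top

theorem le_dist_add_smul_of_chord {E : Type*} [NormedAddCommGroup E] [NormedSpace ℝ E]
    {T : Submodule ℝ E} {x y v ζ : E} {a β₁ β₂ η : ℝ} (ha : 0 < a) (hη : 0 ≤ η)
    (hζ : ‖ζ‖ ≤ β₁) (hζT : β₂ ≤ infDist ζ T) (hηβ : η * β₁ ≤ β₂ / 2) (hv : v ∈ T)
    (hchord : ‖y - x - v‖ ≤ η * ‖y - x‖) :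
    a * β₂ / (2 * (1 + η)) ≤ dist (x + a • ζ) y := by
  rw [dist_eq_norm]
  have hT : a * β₂ ≤ ‖a • ζ - v‖ := by
    have h := infDist_le_dist_of_mem (x := ζ) (T.smul_mem a⁻¹ hv)
    rw [dist_eq_norm] at h
    calc a * β₂ ≤ a * ‖ζ - a⁻¹ • v‖ := by gcongr; exact hζT.trans h
      _ = ‖a • ζ - v‖ := by
        rw [← norm_smul_of_nonneg ha.le, smul_sub, smul_inv_smul₀ ha.ne']
  have hv' : ‖a • ζ - v‖ ≤ ‖x + a • ζ - y‖ + ‖y - x - v‖ := by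
    calc ‖a • ζ - v‖ = ‖(x + a • ζ - y) + (y - x - v)‖ := by abel_nf
      _ ≤ _ := norm_add_le _ _
  have hyx : ‖y - x‖ ≤ ‖x + a • ζ - y‖ + a * β₁ := by
    calc ‖y - x‖ = ‖a • ζ - (x + a • ζ - y)‖ := by abel_nf
      _ ≤ ‖a • ζ‖ + ‖x + a • ζ - y‖ := norm_sub_le _ _
      _ ≤ a * β₁ + ‖x + a • ζ - y‖ := by
        rw [norm_smul, Real.norm_of_nonneg ha.le]; gcongr
      _ = _ := add_comm _ _
  rw [div_le_iff₀ (by positivity)]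
  nlinarith

theorem setLIntegral_inv_dist_pow_le_of_le_dist {X : Type*} [PseudoMetricSpace X]
    [MeasurableSpace X] {μ : Measure X} {A : Set X} {p : X} {N : ℕ} {d : ℝ} (hd : 0 < d)
    (hsep : ∀ y ∈ A, d ≤ dist p y) :
    ∫⁻ y in A, ENNReal.ofReal ((dist p y ^ N)⁻¹) ∂μ ≤ ENNReal.ofReal ((d ^ N)⁻¹) * μ A := by
  calc ∫⁻ y in A, ENNReal.ofReal ((dist p y ^ N)⁻¹) ∂μ
      ≤ ∫⁻ _ in A, ENNReal.ofReal ((d ^ N)⁻¹) ∂μ :=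
        setLIntegral_mono measurable_const fun y hy => by gcongr; exact hsep y hy
    _ = ENNReal.ofReal ((d ^ N)⁻¹) * μ A := setLIntegral_const _ _

theorem setLIntegral_inv_dist_pow_le {X : Type*} [PseudoMetricSpace X] [MeasurableSpace X]
    [OpensMeasurableSpace X] {μ : Measure X} {A : Set X} {p : X} {m e : ℕ} {C : ℝ≥0} {d : ℝ}
    (he : e ≠ 0) (hd : 0 < d)
    (hgrowth : ∀ r, 0 < r → μ (A ∩ closedBall p r) ≤ ENNReal.ofReal (C * r ^ m))
    (hsep : ∀ y ∈ A, d ≤ dist p y) :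
    ∫⁻ y in A, ENNReal.ofReal ((dist p y ^ (m + e))⁻¹) ∂μ
      ≤ ENNReal.ofReal (2 ^ (m + 1) * C / d ^ e) := by
  set R : ℕ → ℝ := fun j => 2 ^ j * d
  have hR : ∀ j, 0 < R j := fun j => by positivity
  have hpt : ∀ y ∈ A, ENNReal.ofReal ((dist p y ^ (m + e))⁻¹) ≤
      ∑' j, (closedBall p (R (j + 1))).indicator
        (fun _ => ENNReal.ofReal ((R j ^ (m + e))⁻¹)) y := by
    intro y hy
    obtain ⟨j, hj, hj'⟩ := exists_nat_pow_near ((one_le_div hd).mpr (hsep y hy)) one_lt_two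
    rw [le_div_iff₀ hd] at hj
    rw [div_lt_iff₀ hd] at hj'
    refine le_trans ?_ (ENNReal.le_tsum j)
    rw [indicator_of_mem (mem_closedBall'.mpr hj'.le)]
    gcongr
  have hterm : ∀ j, (R j ^ (m + e))⁻¹ * (C * R (j + 1) ^ m) ≤ 2 ^ m * C / d ^ e * (1 / 2) ^ j := by
    intro j
    have h2j : (2 : ℝ) ^ j ≤ (2 ^ j) ^ e := le_self_pow₀ (one_le_pow₀ one_le_two) he
    calc (R j ^ (m + e))⁻¹ * (C * R (j + 1) ^ m) = 2 ^ m * C / d ^ e * ((2 ^ j) ^ e)⁻¹ := by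
          simp only [R]; field_simp; ring
      _ ≤ 2 ^ m * C / d ^ e * (1 / 2) ^ j := by
          gcongr
          rw [one_div, inv_pow]
          exact inv_anti₀ (by positivity) h2j
  calc ∫⁻ y in A, ENNReal.ofReal ((dist p y ^ (m + e))⁻¹) ∂μ
      ≤ ∫⁻ y in A, ∑' j, (closedBall p (R (j + 1))).indicator
          (fun _ => ENNReal.ofReal ((R j ^ (m + e))⁻¹)) y ∂μ :=
        setLIntegral_mono (by measurability) hpt
    _ = ∑' j, ENNReal.ofReal ((R j ^ (m + e))⁻¹) * μ (A ∩ closedBall p (R (j + 1))) := by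
        rw [lintegral_tsum fun j =>
          (measurable_const.indicator measurableSet_closedBall).aemeasurable]
        congr 1; ext j
        rw [lintegral_indicator_const measurableSet_closedBall, Measure.restrict_apply
          measurableSet_closedBall, inter_comm]
    _ ≤ ∑' j, ENNReal.ofReal (2 ^ m * C / d ^ e * (1 / 2) ^ j) := by
        refine ENNReal.tsum_le_tsum fun j => ?_
        calc _ ≤ ENNReal.ofReal ((R j ^ (m + e))⁻¹) * ENNReal.ofReal (C * R (j + 1) ^ m) := by
              gcongr; exact hgrowth _ (hR _)
          _ ≤ _ := by
              rw [← ENNReal.ofReal_mul (by positivity)]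
              exact ENNReal.ofReal_le_ofReal (hterm j)
    _ = ENNReal.ofReal (2 ^ (m + 1) * C / d ^ e) := by
        rw [← ENNReal.ofReal_tsum_of_nonneg (fun j => by positivity)
          (summable_geometric_two.mul_left _), tsum_mul_left, tsum_geometric_two]
        ring_nf

theorem integral_norm_sub_rpow_neg_le {E : Type*} [NormedAddCommGroup E] [MeasurableSpace E]
    [OpensMeasurableSpace E] {μ : Measure E} {S : Set E} {p : E} {N : ℕ} {B : ℝ} (hB : 0 ≤ B)
    (h : ∫⁻ y in S, ENNReal.ofReal ((dist p y ^ N)⁻¹) ∂μ ≤ ENNReal.ofReal B) :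
    ∫ y in S, ‖p - y‖ ^ (-(N : ℝ)) ∂μ ≤ B := by
  simp_rw [Real.rpow_neg (norm_nonneg _), Real.rpow_natCast, ← dist_eq_norm]
  rw [integral_eq_lintegral_of_nonneg_ae (ae_of_all _ fun _ => by positivity) (by fun_prop)]
  exact ENNReal.toReal_le_of_le_ofReal hB h

theorem integral_norm_add_smul_sub_rpow_neg_le {E : Type*} [NormedAddCommGroup E]
    [NormedSpace ℝ E] [MeasurableSpace E] [OpensMeasurableSpace E] {μ : Measure E} {S A : Set E}
    {T : Submodule ℝ E} {x₀ x ζ : E} {ρ a β₁ β₂ η : ℝ} {m e : ℕ} {C : ℝ≥0}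
    (he : e ≠ 0) (hSfin : μ S ≠ ∞) (hρ : 0 < ρ) (ha : 0 < a) (hβ₂ : 0 < β₂) (hη : 0 ≤ η)
    (hηβ : η * β₁ ≤ β₂ / 2) (hA : S ∩ closedBall x₀ ρ ⊆ A) (hgrowth : UpperAhlforsRegular μ A m C)
    (hchord : ∀ y₁ ∈ A, ∀ y₂ ∈ A, ∃ v ∈ T, ‖y₁ - y₂ - v‖ ≤ η * ‖y₁ - y₂‖)
    (hx : x ∈ S) (hxx₀ : dist x x₀ ≤ ρ / 4) (haβ : a * β₁ ≤ ρ / 4) (hζ : ‖ζ‖ ≤ β₁)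
    (hζT : β₂ ≤ infDist ζ T) :
    ∫ y in S, ‖x + a • ζ - y‖ ^ (-((m + e : ℕ) : ℝ)) ∂μ ≤
      ((ρ / 2) ^ (m + e))⁻¹ * (μ S).toReal
        + 2 ^ (m + 1) * C / (a * (β₂ / (2 * (1 + η)))) ^ e := by
  set p := x + a • ζ
  have hpx₀ : dist p x₀ ≤ ρ / 2 := by
    calc dist p x₀ ≤ dist p x + dist x x₀ := dist_triangle _ _ _
      _ ≤ a * β₁ + ρ / 4 := by
          gcongr
          rw [dist_eq_norm, add_sub_cancel_left, norm_smul_of_nonneg ha.le]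
          gcongr
      _ ≤ ρ / 2 := by linarith
  have hfar : ∀ y ∈ S \ closedBall x₀ ρ, ρ / 2 ≤ dist p y := fun y hy => by
    have hy₀ : ρ < dist y x₀ := not_le.mp hy.2
    have := dist_triangle y p x₀
    rw [dist_comm p y]
    linarith
  have hnear : ∀ y ∈ S ∩ closedBall x₀ ρ, a * (β₂ / (2 * (1 + η))) ≤ dist p y := by
    intro y hy
    have hxA : x ∈ A := hA ⟨hx, mem_closedBall.mpr (by linarith)⟩
    obtain ⟨v, hv, hyv⟩ := hchord y (hA hy) x hxA
    rw [← mul_div_assoc]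
    exact le_dist_add_smul_of_chord ha hη hζ hζT hηβ hv hyv
  apply integral_norm_sub_rpow_neg_le (by positivity)
  calc ∫⁻ y in S, ENNReal.ofReal ((dist p y ^ (m + e))⁻¹) ∂μ
      ≤ ∫⁻ y in (S \ closedBall x₀ ρ) ∪ (S ∩ closedBall x₀ ρ),
          ENNReal.ofReal ((dist p y ^ (m + e))⁻¹) ∂μ :=
        lintegral_mono_set (by rw [sdiff_union_inter])
    _ ≤ _ := lintegral_union_le _ _ _
    _ ≤ ENNReal.ofReal (((ρ / 2) ^ (m + e))⁻¹) * μ S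
          + ENNReal.ofReal (2 ^ (m + 1) * C / (a * (β₂ / (2 * (1 + η)))) ^ e) := by
        gcongr
        · exact (setLIntegral_inv_dist_pow_le_of_le_dist (by positivity) hfar).trans
            (by gcongr; exact sdiff_subset)
        · exact setLIntegral_inv_dist_pow_le he (by positivity)
            (fun r hr => (measure_mono (inter_subset_inter_left _ hA)).trans (hgrowth p r hr)) hnear
    _ = _ := by
        rw [ENNReal.ofReal_add (by positivity) (by positivity), ENNReal.ofReal_mul (by positivity),
          ENNReal.ofReal_toReal hSfin]

theorem tendsto_pow_mul_add_div_mul_pow {ι : Type*} {l : Filter ι} {ε a : ι → ℝ} {e : ℕ}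
    (he : e ≠ 0) (K₁ K₂ c : ℝ) (ha : ∀ k, a k ≠ 0) (halim : Tendsto a l (𝓝 0))
    (hratio : Tendsto (fun k => ε k / a k) l (𝓝 0)) :
    Tendsto (fun k => ε k ^ e * (K₁ + K₂ / (a k * c) ^ e)) l (𝓝 0) := by
  have hε : Tendsto ε l (𝓝 0) := by
    simpa [div_mul_cancel₀ _ (ha _)] using hratio.mul halim
  have h := ((hε.pow e).mul_const K₁).add ((hratio.pow e).const_mul (K₂ / c ^ e))
  rw [zero_pow he, zero_mul, mul_zero, add_zero] at h
  refine h.congr fun k => ?_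
  rw [div_pow, mul_pow]
  ring

section ApproximatesLinearOn

variable {𝕜 E F : Type*} [NontriviallyNormedField 𝕜] [NormedAddCommGroup E] [NormedSpace 𝕜 E]
  [NormedAddCommGroup F] [NormedSpace 𝕜 F] {g : E → F} {f' : E →L[𝕜] F} {s : Set E} {c K : ℝ≥0}

theorem ApproximatesLinearOn.antilipschitzWith_two_mul (hg : ApproximatesLinearOn g f' s c)
    (hf' : AntilipschitzWith K f') (hc : K * c ≤ 2⁻¹) :
    AntilipschitzWith (2 * K) (s.domRestrict g) := by
  refine AntilipschitzWith.of_le_mul_dist fun ⟨x, hx⟩ ⟨y, hy⟩ => ?_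
  simp only [Subtype.dist_eq, dist_eq_norm, domRestrict_apply]
  have hlin : ‖x - y‖ ≤ K * ‖f' (x - y)‖ := by simpa [dist_eq_norm] using hf'.le_mul_dist (x - y) 0
  have happrox : ‖f' (x - y)‖ ≤ ‖g x - g y‖ + c * ‖x - y‖ :=
    calc ‖f' (x - y)‖ = ‖(g x - g y) - (g x - g y - f' (x - y))‖ := by rw [sub_sub_cancel]
      _ ≤ ‖g x - g y‖ + ‖g x - g y - f' (x - y)‖ := norm_sub_le _ _
      _ ≤ ‖g x - g y‖ + c * ‖x - y‖ := by gcongr; exact hg x hx y hy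
  have hc' : (K : ℝ) * c ≤ 2⁻¹ := by exact_mod_cast hc
  push_cast
  nlinarith [norm_nonneg (x - y), norm_nonneg (g x - g y), K.coe_nonneg]

theorem ApproximatesLinearOn.norm_sub_sub_le (hg : ApproximatesLinearOn g f' s c)
    (hanti : AntilipschitzWith K (s.domRestrict g)) {x y : E} (hx : x ∈ s) (hy : y ∈ s) :
    ‖g x - g y - f' (x - y)‖ ≤ c * K * ‖g x - g y‖ := by
  have hxy : ‖x - y‖ ≤ K * ‖g x - g y‖ := by
    simpa [Subtype.dist_eq, dist_eq_norm] using hanti.le_mul_dist ⟨x, hx⟩ ⟨y, hy⟩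
  calc ‖g x - g y - f' (x - y)‖ ≤ c * ‖x - y‖ := hg x hx y hy
    _ ≤ c * (K * ‖g x - g y‖) := by gcongr
    _ = c * K * ‖g x - g y‖ := by ring

end ApproximatesLinearOn

theorem upperAhlforsRegular_image_of_lipschitzOnWith
    {E Y : Type*} [NormedAddCommGroup E] [NormedSpace ℝ E] [FiniteDimensional ℝ E]
    [MeasurableSpace E] [BorelSpace E] [MetricSpace Y] [MeasurableSpace Y] [BorelSpace Y]
    {g : E → Y} {s : Set E} {L K : ℝ≥0} (hL : LipschitzOnWith L g s)
    (hK : AntilipschitzWith K (s.domRestrict g)) :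
    ∃ C, UpperAhlforsRegular μH[Module.finrank ℝ E] (g '' s) (Module.finrank ℝ E) C := by
  set d := Module.finrank ℝ E
  set B := μH[d] (closedBall (0 : E) 1)
  refine ⟨L ^ d * (2 * K) ^ d * B.toNNReal, fun q r hr => ?_⟩
  rcases (g '' s ∩ closedBall q r).eq_empty_or_nonempty with h | ⟨_, ⟨z₀, hz₀, rfl⟩, hz₀q⟩
  · simp [h]
  have hsub : g '' s ∩ closedBall q r ⊆ g '' (s ∩ closedBall z₀ (2 * K * r)) := by
    rintro - ⟨⟨z, hz, rfl⟩, hzq⟩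
    refine ⟨z, ⟨hz, ?_⟩, rfl⟩
    calc dist z z₀ ≤ K * dist (g z) (g z₀) := hK.le_mul_dist ⟨z, hz⟩ ⟨z₀, hz₀⟩
      _ ≤ K * (r + r) := by gcongr; exact (dist_triangle_right _ _ q).trans (add_le_add hzq hz₀q)
      _ = 2 * K * r := by ring
  calc μH[d] (g '' s ∩ closedBall q r) ≤ μH[d] (g '' (s ∩ closedBall z₀ (2 * K * r))) :=
        measure_mono hsub
    _ ≤ (L : ℝ≥0∞) ^ (d : ℝ) * μH[d] (s ∩ closedBall z₀ (2 * K * r)) :=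
        (hL.mono inter_subset_left).hausdorffMeasure_image_le (by positivity)
    _ ≤ (L : ℝ≥0∞) ^ (d : ℝ) * μH[d] (closedBall z₀ (2 * K * r)) := by
        gcongr; exact inter_subset_right
    _ = ENNReal.ofReal ((L ^ d * (2 * K) ^ d * B.toNNReal : ℝ≥0) * r ^ d) := by
        push_cast [ENNReal.coe_toNNReal_eq_toReal]
        rw [Measure.addHaar_closedBall' _ _ (by positivity), ENNReal.rpow_natCast,
          ENNReal.ofReal_mul (by positivity), ENNReal.ofReal_mul (by positivity),
          ENNReal.ofReal_toReal (measure_closedBall_lt_top).ne, mul_pow,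
          ENNReal.ofReal_mul (by positivity), ENNReal.ofReal_mul (by positivity),
          ENNReal.ofReal_pow NNReal.zero_le_coe, ENNReal.ofReal_coe_nnreal]
        ring

theorem exists_isOpen_image_subset_approximatesLinearOn
    {m : ℕ} {F : Type*} [NormedAddCommGroup F] [NormedSpace ℝ F]
    {M : Type*} [TopologicalSpace M] [ChartedSpace (EuclideanSpace ℝ (Fin m)) M]
    {f : M → F} {p : M} (hf : ContMDiffAt (𝓡 m) 𝓘(ℝ, F) 1 f p) {c : ℝ≥0} (hc : 0 < c) :
    ∃ U : Set M, IsOpen U ∧ p ∈ U ∧ ∃ (g : EuclideanSpace ℝ (Fin m) → F)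
      (s : Set (EuclideanSpace ℝ (Fin m))),
      f '' U ⊆ g '' s ∧ ApproximatesLinearOn g (mfderiv (𝓡 m) 𝓘(ℝ, F) f p) s c := by
  set φ := extChartAt (𝓡 m) p
  have hg : ContDiffAt ℝ 1 (f ∘ φ.symm) (φ p) := by
    simpa [φ, contDiffWithinAt_univ, chartAt_self_eq] using (contMDiffAt_iff.mp hf).2
  have hD : mfderiv (𝓡 m) 𝓘(ℝ, F) f p = fderiv ℝ (f ∘ φ.symm) (φ p) := by
    rw [(hf.mdifferentiableAt one_ne_zero).mfderiv, writtenInExtChartAt,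
      extChartAt_model_space_eq_id, PartialEquiv.refl_coe, Function.id_comp,
      modelWithCornersSelf_coe, range_id, fderivWithin_univ]
  obtain ⟨t, ht, hgt⟩ :=
    (hD ▸ hg.hasStrictFDerivAt one_ne_zero).approximates_deriv_on_nhds (Or.inr hc)
  obtain ⟨U, hUsub, hUopen, hpU⟩ := mem_nhds_iff.mp <| inter_mem
    (extChartAt_source_mem_nhds (I := 𝓡 m) p) ((continuousAt_extChartAt p).preimage_mem_nhds ht)
  refine ⟨U, hUopen, hpU, f ∘ φ.symm, t, ?_, hgt⟩
  rintro - ⟨q, hq, rfl⟩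
  exact ⟨φ q, (hUsub hq).2, by simp [φ.left_inv (hUsub hq).1]⟩

theorem ContMDiffAt.exists_isOpen_upperAhlforsRegular_image
    {m : ℕ} {F : Type*} [NormedAddCommGroup F] [NormedSpace ℝ F] [MeasurableSpace F] [BorelSpace F]
    {M : Type*} [TopologicalSpace M] [ChartedSpace (EuclideanSpace ℝ (Fin m)) M]
    {f : M → F} {p : M} (hf : ContMDiffAt (𝓡 m) 𝓘(ℝ, F) 1 f p)
    (hinj : Function.Injective (mfderiv (𝓡 m) 𝓘(ℝ, F) f p)) {η : ℝ} (hη : 0 < η) :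
    ∃ U : Set M, IsOpen U ∧ p ∈ U ∧ (∃ C, UpperAhlforsRegular μH[m] (f '' U) m C) ∧
      ∀ y₁ ∈ f '' U, ∀ y₂ ∈ f '' U,
        ∃ v : F, (∃ w, mfderiv (𝓡 m) 𝓘(ℝ, F) f p w = v) ∧ ‖y₁ - y₂ - v‖ ≤ η * ‖y₁ - y₂‖ := by
  set D : EuclideanSpace ℝ (Fin m) →L[ℝ] F := mfderiv (𝓡 m) 𝓘(ℝ, F) f p
  obtain ⟨K, hK0, hK⟩ := LinearMap.exists_antilipschitzWith (D : EuclideanSpace ℝ (Fin m) →ₗ[ℝ] F)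
    (LinearMap.ker_eq_bot.mpr hinj)
  set c : ℝ≥0 := Real.toNNReal (min 1 η / (2 * K))
  have hc : (c : ℝ) = min 1 η / (2 * K) := Real.coe_toNNReal _ (by positivity)
  have hc0 : 0 < c := by rw [← NNReal.coe_pos, hc]; positivity
  obtain ⟨U, hU, hpU, g, s, hUs, hgs⟩ := exists_isOpen_image_subset_approximatesLinearOn hf hc0
  have hanti := hgs.antilipschitzWith_two_mul hK (by
    rw [← NNReal.coe_le_coe]; push_cast; rw [hc]; field_simp; exact min_le_left _ _)
  refine ⟨U, hU, hpU, ?_, ?_⟩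
  · obtain ⟨C, hC⟩ := upperAhlforsRegular_image_of_lipschitzOnWith
      (lipschitzOnWith_iff_restrict.mpr hgs.lipschitz) hanti
    rw [finrank_euclideanSpace_fin] at hC
    exact ⟨C, fun q r hr => (measure_mono (inter_subset_inter_left _ hUs)).trans (hC q r hr)⟩
  · rintro y₁ hy₁ y₂ hy₂
    obtain ⟨z₁, hz₁, rfl⟩ := hUs hy₁
    obtain ⟨z₂, hz₂, rfl⟩ := hUs hy₂
    refine ⟨D (z₁ - z₂), ⟨z₁ - z₂, rfl⟩, (hgs.norm_sub_sub_le hanti hz₁ hz₂).trans ?_⟩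
    gcongr
    push_cast; rw [hc]; field_simp; exact min_le_right _ _

theorem hausdorffMeasure_range_lt_top {m : ℕ} {F : Type*} [NormedAddCommGroup F]
    [NormedSpace ℝ F] [MeasurableSpace F] [BorelSpace F] {M : Type*} [TopologicalSpace M]
    [CompactSpace M] [ChartedSpace (EuclideanSpace ℝ (Fin m)) M] {f : M → F}
    (hf : ContMDiff (𝓡 m) 𝓘(ℝ, F) 1 f)
    (hinj : ∀ p, Function.Injective (mfderiv (𝓡 m) 𝓘(ℝ, F) f p)) (hind : IsInducing f) :
    μH[m] (range f) < ∞ :=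
  measure_range_lt_top_of_upperAhlforsRegular hind fun p =>
    let ⟨U, hU, hpU, hgrowth, _⟩ := (hf p).exists_isOpen_upperAhlforsRegular_image (hinj p) one_pos
    ⟨U, hU, hpU, hgrowth⟩

theorem rescaled_conformal_factor_tendsto_one_general
    (n m : ℕ)
    (M : Type) [TopologicalSpace M] [ChartedSpace (EuclideanSpace ℝ (Fin m)) M]
    [IsManifold (𝓡 m) (⊤ : ℕ∞) M] [CompactSpace M]
    (f : M → EuclideanSpace ℝ (Fin n))
    (hf_smooth : ContMDiff (𝓡 m) 𝓘(ℝ, EuclideanSpace ℝ (Fin n)) (⊤ : ℕ∞) f)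
    (hf_emb : Topology.IsEmbedding f)
    (hf_imm : ∀ p : M,
      Function.Injective (mfderiv (𝓡 m) 𝓘(ℝ, EuclideanSpace ℝ (Fin n)) f p))
    (S : Set (EuclideanSpace ℝ (Fin n))) (hS : S = Set.range f)
    (hcodim : m + 3 ≤ n)
    (xinf : EuclideanSpace ℝ (Fin n)) (pinf : M) (hpinf : f pinf = xinf)
    (T : Submodule ℝ (EuclideanSpace ℝ (Fin n)))
    (hT : ∀ v : EuclideanSpace ℝ (Fin n), v ∈ T ↔
      ∃ w : EuclideanSpace ℝ (Fin m),
        mfderiv (𝓡 m) 𝓘(ℝ, EuclideanSpace ℝ (Fin n)) f pinf w = v)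
    (x : ℕ → EuclideanSpace ℝ (Fin n)) (hx : ∀ k, x k ∈ S)
    (hxlim : Tendsto x atTop (𝓝 xinf))
    (a : ℕ → ℝ) (ha : ∀ k, 0 < a k) (halim : Tendsto a atTop (𝓝 (0:ℝ)))
    (ε : ℕ → ℝ) (hε : ∀ k, 0 < ε k)
    (hratio : Tendsto (fun k => ε k / a k) atTop (𝓝 (0:ℝ)))
    (β₁ β₂ : ℝ) (hβ₁ : 0 < β₁) (hβ₂ : 0 < β₂) :
    ∀ δ : ℝ, 0 < δ → ∃ N : ℕ, ∀ k ≥ N,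
      ∀ ζ : EuclideanSpace ℝ (Fin n), ‖ζ‖ ≤ β₁ →
        β₂ ≤ Metric.infDist ζ (T : Set (EuclideanSpace ℝ (Fin n))) →
        (ε k) ^ ((n:ℝ) - m - 2) *
            ∫ y in S, ‖x k + a k • ζ - y‖ ^ (-((n:ℝ) - 2)) ∂μH[(m:ℝ)] < δ := by
  obtain ⟨e, rfl⟩ : ∃ e, n = m + e + 2 := ⟨n - m - 2, by omega⟩
  have he : e ≠ 0 := by omega
  subst hS hpinf
  have hf : ContMDiff (𝓡 m) 𝓘(ℝ, EuclideanSpace ℝ (Fin (m + e + 2))) 1 f :=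
    hf_smooth.of_le (by simp)
  -- `η β₁ = β₂ / 2`: at the scale `a β₁` of `a • ζ`, chords of `S` stay within half the
  -- distance `a β₂` from `a • ζ` to `T`
  set η := β₂ / (2 * β₁)
  obtain ⟨U, hU, hpU, ⟨C, hC⟩, hchord⟩ :=
    (hf pinf).exists_isOpen_upperAhlforsRegular_image (hf_imm pinf) (by positivity : 0 < η)
  obtain ⟨ρ, hρ, hρU⟩ := hf_emb.isInducing.exists_range_inter_closedBall_subset_image hU hpU
  have hfin := (hausdorffMeasure_range_lt_top hf hf_imm hf_emb.isInducing).ne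
  intro δ hδ
  obtain ⟨N, hN⟩ := eventually_atTop.mp <|
    (hxlim.eventually (closedBall_mem_nhds _ (by positivity : 0 < ρ / 4))).and <|
    (halim.eventually (ge_mem_nhds (by positivity : 0 < ρ / 4 / β₁))).and <|
    (tendsto_pow_mul_add_div_mul_pow he (((ρ / 2) ^ (m + e))⁻¹ * (μH[m] (range f)).toReal)
      (2 ^ (m + 1) * C) (β₂ / (2 * (1 + η))) (fun k => (ha k).ne') halim hratio).eventually
      (gt_mem_nhds hδ)
  refine ⟨N, fun k hk ζ hζ hζT => ?_⟩
  obtain ⟨hxk, hak, hsmall⟩ := hN k hk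
  rw [show ((m + e + 2 : ℕ) : ℝ) - m - 2 = e by push_cast; ring, Real.rpow_natCast,
    show -(((m + e + 2 : ℕ) : ℝ) - 2) = -((m + e : ℕ) : ℝ) by push_cast; ring]
  refine lt_of_le_of_lt (mul_le_mul_of_nonneg_left ?_ (pow_nonneg (hε k).le e)) hsmall
  refine integral_norm_add_smul_sub_rpow_neg_le he hfin hρ (ha k) hβ₂ (by positivity)
    (le_of_eq (by simp only [η]; field_simp)) hρU hC (fun y₁ hy₁ y₂ hy₂ => ?_) (hx k) hxk
    (by rwa [le_div_iff₀ hβ₁] at hak) hζ hζT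
  obtain ⟨v, hv, hyv⟩ := hchord y₁ hy₁ y₂ hy₂
  exact ⟨v, (hT v).mpr hv, hyv⟩

/-- After rescaling around `x_k ∈ S` at a scale `a_k` much larger than `ε_k`, the
conformal factors converge uniformly to 1 on compact sets avoiding the tangent
plane (used in the second case of Proposition "outer-barriers"). -/
theorem rescaled_conformal_factor_tendsto_one
    (n m : ℕ) (hn : 3 ≤ n)
    (M : Type) [TopologicalSpace M] [ChartedSpace (EuclideanSpace ℝ (Fin m)) M]
    [IsManifold (𝓡 m) (⊤ : ℕ∞) M] [CompactSpace M]
    (f : M → EuclideanSpace ℝ (Fin n))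
    (hf_smooth : ContMDiff (𝓡 m) 𝓘(ℝ, EuclideanSpace ℝ (Fin n)) (⊤ : ℕ∞) f)
    (hf_emb : Topology.IsEmbedding f)
    (hf_imm : ∀ p : M,
      Function.Injective (mfderiv (𝓡 m) 𝓘(ℝ, EuclideanSpace ℝ (Fin n)) f p))
    (S : Set (EuclideanSpace ℝ (Fin n))) (hS : S = Set.range f)
    (hcodim : m + 3 ≤ n)
    (xinf : EuclideanSpace ℝ (Fin n)) (pinf : M) (hpinf : f pinf = xinf)
    (T : Submodule ℝ (EuclideanSpace ℝ (Fin n)))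
    (hT : ∀ v : EuclideanSpace ℝ (Fin n), v ∈ T ↔
      ∃ w : EuclideanSpace ℝ (Fin m),
        mfderiv (𝓡 m) 𝓘(ℝ, EuclideanSpace ℝ (Fin n)) f pinf w = v)
    (x : ℕ → EuclideanSpace ℝ (Fin n)) (hx : ∀ k, x k ∈ S)
    (hxlim : Tendsto x atTop (𝓝 xinf))
    (a : ℕ → ℝ) (ha : ∀ k, 0 < a k) (halim : Tendsto a atTop (𝓝 (0:ℝ)))
    (ε : ℕ → ℝ) (hε : ∀ k, 0 < ε k)
    (hratio : Tendsto (fun k => ε k / a k) atTop (𝓝 (0:ℝ)))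
    (β₁ β₂ : ℝ) (hβ₁ : 0 < β₁) (hβ₂ : 0 < β₂) :
    ∀ δ : ℝ, 0 < δ → ∃ N : ℕ, ∀ k ≥ N,
      ∀ ζ : EuclideanSpace ℝ (Fin n), ‖ζ‖ ≤ β₁ →
        β₂ ≤ Metric.infDist ζ (T : Set (EuclideanSpace ℝ (Fin n))) →
        (ε k) ^ ((n:ℝ) - m - 2) *
            ∫ y in S, ‖x k + a k • ζ - y‖ ^ (-((n:ℝ) - 2)) ∂μH[(m:ℝ)] < δ :=
  rescaled_conformal_factor_tendsto_one_general n m M f hf_smooth hf_emb hf_imm S hS hcodim xinf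
    pinf hpinf T hT x hx hxlim a ha halim ε hε hratio β₁ β₂ hβ₁ hβ₂
end

section
/- Let n ≥ 3 and let S ⊂ ℝⁿ be a nonempty compact embedded smooth submanifold of dimension m with n − m ≥ 3. Then ∫_S ‖x − y‖^{−(n−2)} dH^m(y) → ∞ as dist(x, S) → 0 with x ∉ S; that is, for every M > 0 there exists d > 0 such that every x ∈ ℝⁿ \ S with dist(x, S) < d satisfies ∫_S ‖x − y‖^{−(n−2)} dH^m(y) > M. In particular, for each fixed ε > 0, the conformal factor u_ε(x) = 1 + ε^{n−m−2} ∫_S ‖x − y‖^{−(n−2)} dH^m(y) tends to infinity at S. -/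
/-!
Near each of its points, a chart exhibits `S` as the image of a Euclidean `m`-ball under a
bi-Lipschitz map (the differential is injective), so by compactness `H^m(S) < ∞` and
`H^m(S ∩ B̄(p, t)) ≥ c tᵐ` for all `p ∈ S` and `t ≤ c`. If `δ = dist(x, S)` and `p ∈ S` lies
within `2δ` of `x`, then `‖x - y‖ ≤ 3δ` on `S ∩ B̄(p, δ)`, so the integral is at least
`3^{-(n-2)} c δ^{m-(n-2)}`, which tends to `∞` as `δ → 0` because `m < n - 2`.
-/

open MeasureTheory Metric Filter Topology Manifold Set Module
open scoped ENNReal NNReal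

theorem AntilipschitzWith.le_hausdorffMeasure_image_of_domRestrict
    {X Y : Type*} [EMetricSpace X] [MeasurableSpace X] [BorelSpace X]
    [EMetricSpace Y] [MeasurableSpace Y] [BorelSpace Y] {F : X → Y} {s t : Set X} {K : ℝ≥0}
    {d : ℝ} (hF : AntilipschitzWith K (s.domRestrict F)) (hd : 0 ≤ d) (hts : t ⊆ s) :
    μH[d] t ≤ (K : ℝ≥0∞) ^ d * μH[d] (F '' t) :=
  calc μH[d] t = μH[d] (Subtype.val ⁻¹' t : Set s) := by
        rw [← (isometry_subtype_coe (s := s)).hausdorffMeasure_image (Or.inl hd),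
          image_preimage_eq_of_subset (by simpa using hts)]
    _ ≤ (K : ℝ≥0∞) ^ d * μH[d] (s.domRestrict F '' (Subtype.val ⁻¹' t)) :=
        hF.le_hausdorffMeasure_image hd _
    _ = (K : ℝ≥0∞) ^ d * μH[d] (F '' t) := by rw [image_domRestrict, inter_eq_left.2 hts]

theorem HasStrictFDerivAt.exists_lipschitzOnWith_antilipschitzWith
    {E G : Type*} [NormedAddCommGroup E] [NormedSpace ℝ E] [FiniteDimensional ℝ E]
    [NormedAddCommGroup G] [NormedSpace ℝ G] {F : E → G} {A : E →L[ℝ] G} {a : E}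
    (hF : HasStrictFDerivAt F A a) (hA : Function.Injective A) :
    ∃ s ∈ 𝓝 a, ∃ L K : ℝ≥0, 0 < L ∧ 0 < K ∧
      LipschitzOnWith L F s ∧ AntilipschitzWith K (s.domRestrict F) := by
  obtain ⟨K, hK0, hK⟩ := (A : E →ₗ[ℝ] G).exists_antilipschitzWith (LinearMap.ker_eq_bot.2 hA)
  have hε : (2 * K)⁻¹ < K⁻¹ := by
    gcongr
    exact lt_two_mul_self hK0
  obtain ⟨s, hs, happrox⟩ :=
    hF.approximates_deriv_on_nhds (c := (2 * K)⁻¹) (Or.inr (by positivity))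
  refine ⟨s, hs, ‖A‖₊ + (2 * K)⁻¹, (K⁻¹ - (2 * K)⁻¹)⁻¹, by positivity,
    inv_pos.2 (tsub_pos_of_lt hε), lipschitzOnWith_iff_restrict.2 happrox.lipschitz, ?_⟩
  convert! (hK.domRestrict s).add_lipschitzWith happrox.lipschitz_sub hε using 1
  ext
  simp

theorem hasStrictFDerivAt_comp_extChartAt_symm {E G M : Type*} [NormedAddCommGroup E]
    [NormedSpace ℝ E] [NormedAddCommGroup G] [NormedSpace ℝ G] [TopologicalSpace M]
    [ChartedSpace E M] {f : M → G} {q : M} (hf : ContMDiffAt 𝓘(ℝ, E) 𝓘(ℝ, G) 1 f q) :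
    HasStrictFDerivAt (f ∘ (extChartAt 𝓘(ℝ, E) q).symm) (mfderiv 𝓘(ℝ, E) 𝓘(ℝ, G) f q)
      (extChartAt 𝓘(ℝ, E) q q) := by
  have hF : ContDiffAt ℝ 1 (f ∘ (extChartAt 𝓘(ℝ, E) q).symm) (extChartAt 𝓘(ℝ, E) q q) := by
    simpa [Function.comp_def, chartAt_self_eq, contDiffWithinAt_univ] using (contMDiffAt_iff.1 hf).2
  rw [(hf.mdifferentiableAt one_ne_zero).mfderiv, modelWithCornersSelf_coe, range_id,
    fderivWithin_univ]
  exact hF.hasStrictFDerivAt one_ne_zero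

section FiniteDimensional

variable {E : Type*} [NormedAddCommGroup E] [NormedSpace ℝ E] [FiniteDimensional ℝ E]
  [MeasurableSpace E] [BorelSpace E]

theorem exists_pos_ofReal_mul_pow_le_hausdorffMeasure_image_inter_closedBall {Y : Type*}
    [MetricSpace Y] [MeasurableSpace Y] [BorelSpace Y] {F : E → Y} {s : Set E} {L K : ℝ≥0}
    (hK₀ : 0 < K) (hL : LipschitzOnWith L F s)
    (hK : AntilipschitzWith K (s.domRestrict F)) :
    ∃ c > 0, ∀ z ρ, 0 < ρ → ball z ρ ⊆ s →
      ENNReal.ofReal (c * ρ ^ finrank ℝ E) ≤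
        μH[finrank ℝ E] (F '' s ∩ closedBall (F z) (L * ρ)) := by
  set m := finrank ℝ E
  have hB : 0 < (μH[m] (ball (0 : E) 1)).toReal :=
    ENNReal.toReal_pos (measure_ball_pos _ _ one_pos).ne' measure_ball_lt_top.ne
  refine ⟨(μH[m] (ball (0 : E) 1)).toReal / K ^ m, by positivity, fun z ρ hρ hzs => ?_⟩
  have himage : F '' ball z ρ ⊆ F '' s ∩ closedBall (F z) (L * ρ) := by
    rintro _ ⟨w, hw, rfl⟩
    refine ⟨mem_image_of_mem F (hzs hw), ?_⟩
    calc dist (F w) (F z) ≤ L * dist w z := hL.dist_le_mul w (hzs hw) z (hzs (mem_ball_self hρ))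
      _ ≤ L * ρ := by gcongr; exact (mem_ball.1 hw).le
  have hball := hK.le_hausdorffMeasure_image_of_domRestrict (d := m) (Nat.cast_nonneg _) hzs
  rw [Measure.addHaar_ball_of_pos _ _ hρ, ENNReal.rpow_natCast] at hball
  rw [← ENNReal.mul_le_mul_iff_right (pow_ne_zero m (ENNReal.coe_ne_zero.2 hK₀.ne'))
    (ENNReal.pow_ne_top ENNReal.coe_ne_top)]
  calc (K : ℝ≥0∞) ^ m * ENNReal.ofReal ((μH[m] (ball (0 : E) 1)).toReal / K ^ m * ρ ^ m)
      = ENNReal.ofReal (ρ ^ m) * μH[m] (ball (0 : E) 1) := by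
        have hKm : (K : ℝ≥0∞) ^ m = ENNReal.ofReal ((K : ℝ) ^ m) := by
          rw [ENNReal.ofReal_pow K.coe_nonneg, ENNReal.ofReal_coe_nnreal]
        rw [hKm, ← ENNReal.ofReal_toReal measure_ball_lt_top.ne,
          ← ENNReal.ofReal_mul (by positivity), ← ENNReal.ofReal_mul (by positivity),
          ENNReal.toReal_ofReal ENNReal.toReal_nonneg]
        congr 1
        field_simp
    _ ≤ K ^ m * μH[m] (F '' ball z ρ) := hball
    _ ≤ K ^ m * μH[m] (F '' s ∩ closedBall (F z) (L * ρ)) := by gcongr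

theorem exists_nhds_hausdorffMeasure_image_lt_top_and_lower_density
    {G M : Type*} [NormedAddCommGroup G] [NormedSpace ℝ G] [MeasurableSpace G] [BorelSpace G]
    [TopologicalSpace M] [ChartedSpace E M] {f : M → G} {q₀ : M}
    (hf : ContMDiffAt 𝓘(ℝ, E) 𝓘(ℝ, G) 1 f q₀)
    (hinj : Function.Injective (mfderiv 𝓘(ℝ, E) 𝓘(ℝ, G) f q₀)) :
    ∃ U ∈ 𝓝 q₀, μH[finrank ℝ E] (f '' U) < ∞ ∧ ∃ c > 0, ∀ q ∈ U, ∀ t, 0 < t → t ≤ c →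
      ENNReal.ofReal (c * t ^ (finrank ℝ E : ℝ)) ≤
        μH[finrank ℝ E] (range f ∩ closedBall (f q) t) := by
  set φ := extChartAt 𝓘(ℝ, E) q₀
  set m := finrank ℝ E
  obtain ⟨s, hs, L, K, hL₀, hK₀, hL, hK⟩ :=
    (hasStrictFDerivAt_comp_extChartAt_symm hf).exists_lipschitzOnWith_antilipschitzWith hinj
  obtain ⟨c₁, hc₁, hdensity⟩ :=
    exists_pos_ofReal_mul_pow_le_hausdorffMeasure_image_inter_closedBall hK₀ hL hK
  obtain ⟨r, hr, hrs⟩ := Metric.mem_nhds_iff.1 (inter_mem hs (extChartAt_target_mem_nhds q₀))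
  set U := φ.source ∩ φ ⁻¹' ball (φ q₀) (r / 2)
  have hU : U ∈ 𝓝 q₀ := inter_mem (extChartAt_source_mem_nhds q₀)
    ((continuousAt_extChartAt q₀).preimage_mem_nhds (ball_mem_nhds _ (by positivity)))
  have hfU : ∀ q ∈ U, f q = (f ∘ φ.symm) (φ q) := fun q hq => by
    simp [φ.left_inv hq.1]
  have hUs : ∀ q ∈ U, ∀ ρ ≤ r / 2, ball (φ q) ρ ⊆ s := fun q hq ρ hρ =>
    (ball_subset_ball' (by have := mem_ball.1 hq.2; linarith)).trans (hrs.trans inter_subset_left)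
  refine ⟨U, hU, ?_, min (L * (r / 2)) (c₁ / L ^ m), by positivity, fun q hq t ht htc => ?_⟩
  · calc μH[m] (f '' U) ≤ μH[m] ((f ∘ φ.symm) '' ball (φ q₀) r) := by
          refine measure_mono ?_
          rintro _ ⟨q, hq, rfl⟩
          exact ⟨φ q, ball_subset_ball (by linarith) hq.2, (hfU q hq).symm⟩
      _ ≤ (L : ℝ≥0∞) ^ (m : ℝ) * μH[m] (ball (φ q₀) r) :=
          (hL.mono (hrs.trans inter_subset_left)).hausdorffMeasure_image_le (Nat.cast_nonneg _)
      _ < ∞ := ENNReal.mul_lt_top (by simp) measure_ball_lt_top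
  · set ρ := t / L
    have hρ : 0 < ρ := by positivity
    have htρ : t = L * ρ := (mul_div_cancel₀ t (NNReal.coe_ne_zero.2 hL₀.ne')).symm
    have hρr : ρ ≤ r / 2 := by
      rw [div_le_iff₀ (by positivity), mul_comm]
      exact htc.trans (min_le_left _ _)
    calc ENNReal.ofReal (min (L * (r / 2)) (c₁ / L ^ m) * t ^ (m : ℝ))
        ≤ ENNReal.ofReal (c₁ * ρ ^ m) := by
          apply ENNReal.ofReal_le_ofReal
          calc min (L * (r / 2)) (c₁ / L ^ m) * t ^ (m : ℝ) ≤ c₁ / L ^ m * t ^ m := by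
                rw [Real.rpow_natCast]
                gcongr
                exact min_le_right _ _
            _ = c₁ * ρ ^ m := by rw [div_pow]; ring
      _ ≤ μH[m] ((f ∘ φ.symm) '' s ∩ closedBall ((f ∘ φ.symm) (φ q)) (L * ρ)) :=
          hdensity _ _ hρ (hUs q hq ρ hρr)
      _ ≤ μH[m] (range f ∩ closedBall (f q) t) := by
          rw [← hfU q hq, ← htρ]
          exact measure_mono (inter_subset_inter_left _
            ((image_subset_range _ _).trans (range_comp_subset_range _ _)))

end FiniteDimensional

def IsLowerRegular {X : Type*} [PseudoMetricSpace X] [MeasurableSpace X] (μ : Measure X)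
    (d : ℝ) (S : Set X) (c r₀ : ℝ) : Prop :=
  ∀ p ∈ S, ∀ t, 0 < t → t ≤ r₀ → ENNReal.ofReal (c * t ^ d) ≤ μ (S ∩ closedBall p t)

section Compactness

variable {M X : Type*} [TopologicalSpace M] [CompactSpace M] [MeasurableSpace X]
  {μ : Measure X} {f : M → X}

theorem measure_range_lt_top_of_forall_nhds (h : ∀ q, ∃ U ∈ 𝓝 q, μ (f '' U) < ∞) :
    μ (range f) < ∞ := by
  rw [← image_univ]
  refine isCompact_univ.induction_on (p := fun U => μ (f '' U) < ∞) (by simp)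
    (fun U V hUV hV => (measure_mono (image_mono hUV)).trans_lt hV) (fun U V hU hV => ?_)
    (fun q _ => by simpa only [nhdsWithin_univ] using h q)
  rw [image_union]
  exact (measure_union_le _ _).trans_lt (ENNReal.add_lt_top.2 ⟨hU, hV⟩)

theorem exists_isLowerRegular_range_of_forall_nhds [PseudoMetricSpace X] {d : ℝ}
    (h : ∀ q₀, ∃ U ∈ 𝓝 q₀, ∃ c > 0, ∀ q ∈ U, ∀ t, 0 < t → t ≤ c →
      ENNReal.ofReal (c * t ^ d) ≤ μ (range f ∩ closedBall (f q) t)) :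
    ∃ c > 0, IsLowerRegular μ d (range f) c c := by
  set P : ℝ → M → Prop := fun c q => ∀ t, 0 < t → t ≤ c →
    ENNReal.ofReal (c * t ^ d) ≤ μ (range f ∩ closedBall (f q) t)
  have hP : ∀ {c c' q}, c' ≤ c → P c q → P c' q := fun hcc' hc t ht htc' =>
    (ENNReal.ofReal_le_ofReal (by gcongr)).trans (hc t ht (htc'.trans hcc'))
  obtain ⟨c, hc, hf⟩ := isCompact_univ.induction_on (p := fun U => ∃ c > 0, ∀ q ∈ U, P c q)
    ⟨1, one_pos, by simp⟩ (fun U V hUV ⟨c, hc, hV⟩ => ⟨c, hc, fun q hq => hV q (hUV hq)⟩)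
    (fun U V ⟨c₁, hc₁, hU⟩ ⟨c₂, hc₂, hV⟩ => ⟨min c₁ c₂, lt_min hc₁ hc₂, fun q hq =>
      hq.elim (fun hq => hP (min_le_left _ _) (hU q hq))
        (fun hq => hP (min_le_right _ _) (hV q hq))⟩)
    (fun q _ => by simpa only [nhdsWithin_univ] using h q)
  exact ⟨c, hc, by rintro _ ⟨q, rfl⟩; exact hf q (mem_univ q)⟩

end Compactness

namespace IsLowerRegular

variable {E : Type*} [NormedAddCommGroup E] [MeasurableSpace E] [BorelSpace E] {μ : Measure E}
  {S : Set E} {d s c r₀ : ℝ}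

theorem le_setIntegral_rpow_neg (hreg : IsLowerRegular μ d S c r₀) (hS : IsClosed S)
    (hne : S.Nonempty) (hμS : μ S ≠ ∞) (hs : 0 ≤ s) {x : E} (hx : x ∉ S)
    (hxr₀ : infDist x S ≤ r₀) :
    3 ^ (-s) * c * infDist x S ^ (d - s) ≤ ∫ y in S, ‖x - y‖ ^ (-s) ∂μ := by
  set δ := infDist x S
  have hδ : 0 < δ := (hS.notMem_iff_infDist_pos hne).1 hx
  obtain ⟨p, hpS, hxp⟩ := (infDist_lt_iff hne).1 (by linarith : δ < 2 * δ)
  set B := S ∩ closedBall p δ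
  have hfar : ∀ y ∈ S, δ ≤ ‖x - y‖ := fun y hy => by
    rw [← dist_eq_norm]; exact infDist_le_dist_of_mem hy
  have hnear : ∀ y ∈ B, ‖x - y‖ ≤ 3 * δ := fun y hy => by
    rw [← dist_eq_norm]
    linarith [dist_triangle x p y, mem_closedBall'.1 hy.2]
  have hint : IntegrableOn (fun y => ‖x - y‖ ^ (-s)) S μ := by
    refine Measure.integrableOn_of_bounded (M := δ ^ (-s)) hμS
      ((continuous_const.sub continuous_id).norm.measurable.pow_const _).aestronglyMeasurable ?_
    refine (ae_restrict_iff' hS.measurableSet).2 (Eventually.of_forall fun y hy => ?_)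
    rw [Real.norm_of_nonneg (by positivity)]
    exact Real.rpow_le_rpow_of_nonpos hδ (hfar y hy) (neg_nonpos.2 hs)
  have hμB : c * δ ^ d ≤ μ.real B :=
    (ENNReal.ofReal_le_iff_le_toReal (measure_ne_top_of_subset inter_subset_left hμS)).1
      (hreg p hpS δ hδ hxr₀)
  calc 3 ^ (-s) * c * δ ^ (d - s) = (3 * δ) ^ (-s) * (c * δ ^ d) := by
        rw [Real.mul_rpow (by norm_num) hδ.le, sub_eq_add_neg, Real.rpow_add hδ]; ring
    _ ≤ μ.real B • (3 * δ) ^ (-s) := by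
        rw [smul_eq_mul, mul_comm]; gcongr
    _ ≤ ∫ y in B, ‖x - y‖ ^ (-s) ∂μ :=
        setIntegral_ge_of_const_le (hS.measurableSet.inter measurableSet_closedBall)
          (measure_ne_top_of_subset inter_subset_left hμS)
          (fun y hy => Real.rpow_le_rpow_of_nonpos (hδ.trans_le (hfar y hy.1)) (hnear y hy)
            (neg_nonpos.2 hs)) (hint.mono_set inter_subset_left)
    _ ≤ ∫ y in S, ‖x - y‖ ^ (-s) ∂μ :=
        setIntegral_mono_set hint (Eventually.of_forall fun y => by positivity)
          inter_subset_left.eventuallyLE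

theorem exists_forall_infDist_lt_lt_setIntegral (hreg : IsLowerRegular μ d S c r₀) (hc : 0 < c)
    (hr₀ : 0 < r₀) (hS : IsClosed S) (hne : S.Nonempty) (hμS : μ S ≠ ∞) (hs : 0 ≤ s)
    (hds : d < s) (K : ℝ) :
    ∃ δ₀ > 0, ∀ x ∉ S, infDist x S < δ₀ → K < ∫ y in S, ‖x - y‖ ^ (-s) ∂μ := by
  have hlim : Tendsto (fun δ : ℝ => 3 ^ (-s) * c * δ ^ (d - s)) (𝓝[>] 0) atTop :=
    (tendsto_rpow_neg_nhdsGT_zero (sub_neg.2 hds)).const_mul_atTop (by positivity)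
  obtain ⟨ε, hε, hK⟩ := (nhdsGT_basis 0).eventually_iff.1 (hlim.eventually_gt_atTop K)
  refine ⟨min ε r₀, lt_min hε hr₀, fun x hx hxδ => ?_⟩
  have hδ : 0 < infDist x S := (hS.notMem_iff_infDist_pos hne).1 hx
  exact (hK ⟨hδ, hxδ.trans_le (min_le_left _ _)⟩).trans_le
    (hreg.le_setIntegral_rpow_neg hS hne hμS hs hx (hxδ.trans_le (min_le_right _ _)).le)

end IsLowerRegular

theorem integral_blows_up_near_S_general
    (n m : ℕ)
    (M : Type) [TopologicalSpace M] [ChartedSpace (EuclideanSpace ℝ (Fin m)) M]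
    [CompactSpace M]
    (f : M → EuclideanSpace ℝ (Fin n))
    (hf_smooth : ContMDiff (𝓡 m) 𝓘(ℝ, EuclideanSpace ℝ (Fin n)) (⊤ : ℕ∞) f)
    (hf_imm : ∀ p : M,
      Function.Injective (mfderiv (𝓡 m) 𝓘(ℝ, EuclideanSpace ℝ (Fin n)) f p))
    (S : Set (EuclideanSpace ℝ (Fin n))) (hS : S = Set.range f)
    (hcodim : m + 3 ≤ n) (hSne : S.Nonempty) :
    ∀ Mbig : ℝ, 0 < Mbig → ∃ d > (0:ℝ),
      ∀ x : EuclideanSpace ℝ (Fin n), x ∉ S → Metric.infDist x S < d →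
        Mbig < ∫ y in S, ‖x - y‖ ^ (-((n:ℝ) - 2)) ∂μH[(m:ℝ)] := by
  subst hS
  have hlocal := fun q => exists_nhds_hausdorffMeasure_image_lt_top_and_lower_density
    ((hf_smooth q).of_le (by simp)) (hf_imm q)
  simp only [finrank_euclideanSpace_fin] at hlocal
  obtain ⟨c, hc, hreg⟩ := exists_isLowerRegular_range_of_forall_nhds fun q =>
    (hlocal q).imp fun _ ⟨hU, _, hdensity⟩ => ⟨hU, hdensity⟩
  have hfin := measure_range_lt_top_of_forall_nhds fun q =>
    (hlocal q).imp fun _ ⟨hU, hfin, _⟩ => ⟨hU, hfin⟩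
  have hmn : (m : ℝ) + 3 ≤ n := by exact_mod_cast hcodim
  exact fun Mbig _ => hreg.exists_forall_infDist_lt_lt_setIntegral hc hc
    (isCompact_range hf_smooth.continuous).isClosed hSne hfin.ne (by linarith) (by linarith) Mbig

/-- The Riesz-type integral over `S` blows up as the point approaches `S`; in
particular the conformal factor `u_ε` tends to infinity at `S`. -/
theorem integral_blows_up_near_S
    (n m : ℕ) (hn : 3 ≤ n)
    (M : Type) [TopologicalSpace M] [ChartedSpace (EuclideanSpace ℝ (Fin m)) M]
    [IsManifold (𝓡 m) (⊤ : ℕ∞) M] [CompactSpace M]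
    (f : M → EuclideanSpace ℝ (Fin n))
    (hf_smooth : ContMDiff (𝓡 m) 𝓘(ℝ, EuclideanSpace ℝ (Fin n)) (⊤ : ℕ∞) f)
    (hf_emb : Topology.IsEmbedding f)
    (hf_imm : ∀ p : M,
      Function.Injective (mfderiv (𝓡 m) 𝓘(ℝ, EuclideanSpace ℝ (Fin n)) f p))
    (S : Set (EuclideanSpace ℝ (Fin n))) (hS : S = Set.range f)
    (hcodim : m + 3 ≤ n) (hSne : S.Nonempty) :
    ∀ Mbig : ℝ, 0 < Mbig → ∃ d > (0:ℝ),
      ∀ x : EuclideanSpace ℝ (Fin n), x ∉ S → Metric.infDist x S < d →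
        Mbig < ∫ y in S, ‖x - y‖ ^ (-((n:ℝ) - 2)) ∂μH[(m:ℝ)] :=
  integral_blows_up_near_S_general n m M f hf_smooth hf_imm S hS hcodim hSne
end
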